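/- Let m ≥ 2 and let f(z) = z + ∑_{n≥2} a_n z^n be bi-univalent with inverse g = f⁻¹. If the function z ↦ f(z)/z (extended by 1 at z = 0) belongs to the class P_m and the function w ↦ g(w)/w (extended by 1 at w = 0) belongs to the class P_m, then |a₂| ≤ √m, |a₃| ≤ m, and |2a₂² − a₃| ≤ m. -/

import Mathlib

open MeasureTheory Set Metric Complex

noncomputable section

/-- The `n`-th MacLaurin coefficient of `f`, i.e. `f⁽ⁿ⁾(0)/n!`. -/
def mc (f : ℂ → ℂ) (n : ℕ) : ℂ := iteratedDeriv n f 0 / (n.factorial : ℂ)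

/-- The open unit disk in `ℂ`. -/
def unitDisk : Set ℂ := Metric.ball (0 : ℂ) 1

/-- The kernel `(1 - z e^{it})/(1 + z e^{it})`. -/
def pmKernel (z : ℂ) (t : ℝ) : ℂ :=
  (1 - z * Complex.exp (t * Complex.I)) / (1 + z * Complex.exp (t * Complex.I))

/-- The class `P_m` of functions with bounded boundary rotation: `p` is analytic on the unit
disk, `p 0 = 1`, and `p` is represented against a finite signed Borel measure
`μ = μp - μn` on `[0, 2π]` with `μ([0,2π]) = 1` and total variation `‖μ‖ ≤ m/2`. -/
def MemPm (m : ℝ) (p : ℂ → ℂ) : Prop :=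
  AnalyticOnNhd ℂ p unitDisk ∧ p 0 = 1 ∧
  ∃ μp μn : Measure ℝ, IsFiniteMeasure μp ∧ IsFiniteMeasure μn ∧
    (μp (Set.Icc 0 (2 * Real.pi))).toReal - (μn (Set.Icc 0 (2 * Real.pi))).toReal = 1 ∧
    (μp (Set.Icc 0 (2 * Real.pi))).toReal + (μn (Set.Icc 0 (2 * Real.pi))).toReal ≤ m / 2 ∧
    ∀ z ∈ unitDisk, p z =
      (∫ t in Set.Icc 0 (2 * Real.pi), pmKernel z t ∂μp) -
      (∫ t in Set.Icc 0 (2 * Real.pi), pmKernel z t ∂μn)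

/-- `f` and `g` form a bi-univalent pair: `f` is analytic and injective on the unit disk with
`f 0 = 0`, `f' 0 = 1`, and `g` is the univalent analytic continuation of `f⁻¹` to the unit
disk: `g` is analytic and injective on the unit disk, `g 0 = 0`, and `f (g w) = w` for
`|w| < 1/4`. -/
def BiUnivalentPair (f g : ℂ → ℂ) : Prop :=
  AnalyticOnNhd ℂ f unitDisk ∧ f 0 = 0 ∧ deriv f 0 = 1 ∧ Set.InjOn f unitDisk ∧
  AnalyticOnNhd ℂ g unitDisk ∧ Set.InjOn g unitDisk ∧ g 0 = 0 ∧
  ∀ w : ℂ, ‖w‖ < 1 / 4 → f (g w) = w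

/-!
Write `f z = z * p z` and `g w = w * q w` with `p, q ∈ P_m`. Then `a₂ = p₁` and `a₃ = p₂`, and
differentiating `f ∘ g = id` three times at `0` shows that the third coefficient of `g` is
`2 a₂² - a₃ = q₂`. Expanding the kernel as `(1 - ζ) / (1 + ζ) = 1 + 2 ∑_{k ≥ 1} (-ζ)^k` shows that
every Taylor coefficient of a function in `P_m` is bounded by `2 ‖μ‖ ≤ m`. Hence `|a₃| ≤ m`,
`|2 a₂² - a₃| ≤ m`, and `2 |a₂|² ≤ |a₃| + |2 a₂² - a₃| ≤ 2 m`.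
-/

open Filter Topology

theorem hasSum_one_sub_div_one_add {w : ℂ} (hw : ‖w‖ < 1) :
    HasSum (fun k : ℕ => (if k = 0 then 1 else 2) * (-w) ^ k) ((1 - w) / (1 + w)) := by
  have hw' : 1 + w ≠ 0 := by
    intro h
    simp [show w = -1 by linear_combination h] at hw
  have hgeom := ((hasSum_geometric_of_norm_lt_one (ξ := -w) (by rwa [norm_neg])).mul_left 2).sub
    (hasSum_ite_eq 0 (1 : ℂ))
  rw [show (1 - w) / (1 + w) = 2 * (1 - -w)⁻¹ - 1 by rw [sub_neg_eq_add]; field_simp; ring]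
  refine hgeom.congr_fun fun k => ?_
  rcases eq_or_ne k 0 with rfl | hk
  · norm_num
  · simp [hk]

def pmKernelCoeff (k : ℕ) (t : ℝ) : ℂ := (if k = 0 then 1 else 2) * (-exp (t * I)) ^ k

theorem norm_pmKernelCoeff_le (k : ℕ) (t : ℝ) : ‖pmKernelCoeff k t‖ ≤ 2 := by
  rw [pmKernelCoeff, norm_mul, norm_pow, norm_neg, norm_exp_ofReal_mul_I, one_pow, mul_one]
  split_ifs <;> norm_num

theorem hasSum_pmKernel {z : ℂ} (hz : ‖z‖ < 1) (t : ℝ) :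
    HasSum (fun k => pmKernelCoeff k t * z ^ k) (pmKernel z t) := by
  have hw : ‖z * exp (t * I)‖ < 1 := by rwa [norm_mul, norm_exp_ofReal_mul_I, mul_one]
  refine (hasSum_one_sub_div_one_add hw).congr_fun fun k => ?_
  rw [pmKernelCoeff]
  ring

theorem hasSum_integral_pmKernel (μ : Measure ℝ) [IsFiniteMeasure μ] {z : ℂ} (hz : ‖z‖ < 1) :
    HasSum (fun k => (∫ t, pmKernelCoeff k t ∂μ) * z ^ k) (∫ t, pmKernel z t ∂μ) := by
  have hint : ∀ k, Integrable (fun t => pmKernelCoeff k t * z ^ k) μ := fun k =>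
    (Integrable.of_bound (by unfold pmKernelCoeff; fun_prop) 2
      (ae_of_all _ (norm_pmKernelCoeff_le k))).mul_const _
  have hnorm : ∀ k, ∫ t, ‖pmKernelCoeff k t * z ^ k‖ ∂μ ≤ 2 * μ.real univ * ‖z‖ ^ k := by
    intro k
    calc ∫ t, ‖pmKernelCoeff k t * z ^ k‖ ∂μ ≤ ∫ _, 2 * ‖z‖ ^ k ∂μ :=
          integral_mono (hint k).norm (integrable_const _) fun t => by
            rw [norm_mul, norm_pow]
            gcongr
            exact norm_pmKernelCoeff_le k t
      _ = 2 * μ.real univ * ‖z‖ ^ k := by rw [integral_const, smul_eq_mul]; ring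
  have hsummable : Summable fun k => ∫ t, ‖pmKernelCoeff k t * z ^ k‖ ∂μ :=
    .of_nonneg_of_le (fun k => integral_nonneg fun t => norm_nonneg _) hnorm
      ((summable_geometric_of_lt_one (norm_nonneg z) hz).mul_left _)
  have hsum := hasSum_integral_of_summable_integral_norm hint hsummable
  simp only [integral_mul_const, (hasSum_pmKernel hz _).tsum_eq] at hsum
  exact hsum

theorem MemPm.exists_hasSum {m : ℝ} {p : ℂ → ℂ} (hp : MemPm m p) :
    ∃ c : ℕ → ℂ, (∀ k, ‖c k‖ ≤ m) ∧ ∀ z, ‖z‖ < 1 → HasSum (fun k => c k * z ^ k) (p z) := by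
  obtain ⟨-, -, μp, μn, hμp, hμn, -, htotal, hrep⟩ := hp
  set s := Icc 0 (2 * Real.pi)
  refine ⟨fun k => (∫ t in s, pmKernelCoeff k t ∂μp) - ∫ t in s, pmKernelCoeff k t ∂μn,
    fun k => ?_, fun z hz => ?_⟩
  · have hbound (μ : Measure ℝ) [IsFiniteMeasure μ] :
        ‖∫ t in s, pmKernelCoeff k t ∂μ‖ ≤ 2 * (μ s).toReal := by
      simpa [mul_comm, measureReal_def] using norm_integral_le_of_norm_le_const
        (μ := μ.restrict s) (ae_of_all _ (norm_pmKernelCoeff_le k))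
    calc _ ≤ 2 * (μp s).toReal + 2 * (μn s).toReal :=
          (norm_sub_le _ _).trans (add_le_add (hbound μp) (hbound μn))
      _ ≤ m := by linarith
  · rw [hrep z (mem_ball_zero_iff.2 hz)]
    simpa only [sub_mul] using (hasSum_integral_pmKernel _ hz).sub (hasSum_integral_pmKernel _ hz)

theorem mc_eq_of_hasSum {F : ℂ → ℂ} {c : ℕ → ℂ} {C : ℝ} (hC : ∀ k, ‖c k‖ ≤ C)
    (hF : ∀ z, ‖z‖ < 1 → HasSum (fun k => c k * z ^ k) (F z)) : mc F = c := by
  have hseries : HasFPowerSeriesOnBall F (FormalMultilinearSeries.ofScalars ℂ c) 0 1 := by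
    refine ⟨?_, one_pos, fun {y} hy => ?_⟩
    · refine FormalMultilinearSeries.le_radius_of_bound _ C fun k => ?_
      simpa [FormalMultilinearSeries.ofScalars_norm] using hC k
    · have hy : ‖y‖ < 1 := by simpa [← ofReal_norm] using hy
      simpa [FormalMultilinearSeries.ofScalars_apply_eq, mul_comm] using hF y hy
  have := hseries.analyticAt.hasFPowerSeriesAt.eq_formalMultilinearSeries hseries.hasFPowerSeriesAt
  funext n
  simpa [mc, FormalMultilinearSeries.coeff_ofScalars] using congrArg (·.coeff n) this

theorem MemPm.norm_mc_le {m : ℝ} {p : ℂ → ℂ} (hp : MemPm m p) (n : ℕ) : ‖mc p n‖ ≤ m := by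
  obtain ⟨c, hc, hsum⟩ := hp.exists_hasSum
  rw [mc_eq_of_hasSum hc hsum]
  exact hc n

theorem mc_succ_mul_id {p : ℂ → ℂ} {n : ℕ} (hp : ContDiffAt ℂ (n + 1) p 0) :
    mc (fun z => z * p z) (n + 1) = mc p n := by
  have hleib := iteratedDeriv_fun_mul (f := fun z : ℂ => z) contDiffAt_id hp
  rw [Finset.sum_eq_single 1 (fun i _ hi => by simp [iteratedDeriv_fun_id_zero, hi])
    (by simp)] at hleib
  simp only [mc, hleib, iteratedDeriv_fun_id_zero, Nat.choose_one_right, Nat.factorial_succ]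
  push_cast
  field_simp

theorem mc_succ_eq_mc_ite_div {F : ℂ → ℂ} {n : ℕ} (hF0 : F 0 = 0)
    (hp : ContDiffAt ℂ (n + 1) (fun z => if z = 0 then 1 else F z / z) 0) :
    mc F (n + 1) = mc (fun z => if z = 0 then 1 else F z / z) n := by
  set p := fun z => if z = 0 then 1 else F z / z
  have hF : F = fun z => z * p z := by
    funext z
    rcases eq_or_ne z 0 with rfl | hz
    · simp [hF0]
    · simp [p, hz, mul_div_cancel₀]
  rw [hF]
  exact mc_succ_mul_id hp

section Composition

variable {𝕜 : Type*} [NontriviallyNormedField 𝕜] [CompleteSpace 𝕜] {f g : 𝕜 → 𝕜} {x : 𝕜}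

theorem AnalyticAt.eventually_analyticAt_comp (hg : AnalyticAt 𝕜 g x) (hf : AnalyticAt 𝕜 f (g x)) :
    ∀ᶠ y in 𝓝 x, AnalyticAt 𝕜 g y ∧ AnalyticAt 𝕜 f (g y) :=
  hg.eventually_analyticAt.and (hg.continuousAt.eventually hf.eventually_analyticAt)

theorem AnalyticAt.iteratedDeriv_two_comp (hg : AnalyticAt 𝕜 g x) (hf : AnalyticAt 𝕜 f (g x)) :
    iteratedDeriv 2 (f ∘ g) x =
      iteratedDeriv 2 f (g x) * deriv g x ^ 2 + deriv f (g x) * iteratedDeriv 2 g x := by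
  have hderiv : deriv (f ∘ g) =ᶠ[𝓝 x] fun y => deriv f (g y) * deriv g y := by
    filter_upwards [hg.eventually_analyticAt_comp hf] with y ⟨hgy, hfy⟩
    exact deriv_comp y hfy.differentiableAt hgy.differentiableAt
  have hf'g : deriv (fun y => deriv f (g y)) x = deriv (deriv f) (g x) * deriv g x :=
    deriv_comp x hf.deriv.differentiableAt hg.differentiableAt
  simp only [iteratedDeriv_succ, iteratedDeriv_zero]
  rw [hderiv.deriv_eq, deriv_fun_mul (hf.deriv.fun_comp hg).differentiableAt
    hg.deriv.differentiableAt, hf'g]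
  ring

theorem AnalyticAt.iteratedDeriv_three_comp (hg : AnalyticAt 𝕜 g x) (hf : AnalyticAt 𝕜 f (g x)) :
    iteratedDeriv 3 (f ∘ g) x =
      iteratedDeriv 3 f (g x) * deriv g x ^ 3 +
        3 * iteratedDeriv 2 f (g x) * deriv g x * iteratedDeriv 2 g x +
        deriv f (g x) * iteratedDeriv 3 g x := by
  have hderiv2 : iteratedDeriv 2 (f ∘ g) =ᶠ[𝓝 x] fun y =>
      deriv (deriv f) (g y) * deriv g y ^ 2 + deriv f (g y) * deriv (deriv g) y := by
    filter_upwards [hg.eventually_analyticAt_comp hf] with y ⟨hgy, hfy⟩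
    simpa only [iteratedDeriv_succ, iteratedDeriv_zero] using hgy.iteratedDeriv_two_comp hfy
  have hf'g : deriv (fun y => deriv f (g y)) x = deriv (deriv f) (g x) * deriv g x :=
    deriv_comp x hf.deriv.differentiableAt hg.differentiableAt
  have hf''g : deriv (fun y => deriv (deriv f) (g y)) x =
      deriv (deriv (deriv f)) (g x) * deriv g x :=
    deriv_comp x hf.deriv.deriv.differentiableAt hg.differentiableAt
  have hdf' := (hf.deriv.fun_comp hg).differentiableAt
  have hdf'' := (hf.deriv.deriv.fun_comp hg).differentiableAt
  have hdg' := hg.deriv.differentiableAt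
  have hdg'' := hg.deriv.deriv.differentiableAt
  rw [iteratedDeriv_succ, hderiv2.deriv_eq,
    deriv_fun_add (hdf''.fun_mul (hdg'.fun_pow 2)) (hdf'.fun_mul hdg''),
    deriv_fun_mul hdf'' (hdg'.fun_pow 2), deriv_fun_mul hdf' hdg'', hf''g, hf'g,
    deriv_fun_pow hdg']
  simp only [iteratedDeriv_succ, iteratedDeriv_zero]
  ring

theorem AnalyticAt.iteratedDeriv_of_comp_eventuallyEq_id (hg : AnalyticAt 𝕜 g x)
    (hf : AnalyticAt 𝕜 f (g x)) (hf1 : deriv f (g x) = 1) (hfg : f ∘ g =ᶠ[𝓝 x] id) :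
    deriv g x = 1 ∧ iteratedDeriv 2 g x = -iteratedDeriv 2 f (g x) ∧
      iteratedDeriv 3 g x = 3 * iteratedDeriv 2 f (g x) ^ 2 - iteratedDeriv 3 f (g x) := by
  have h1 : deriv f (g x) * deriv g x = 1 := by
    rw [← deriv_comp x hf.differentiableAt hg.differentiableAt, hfg.deriv_eq, deriv_id]
  have h2 := hfg.iteratedDeriv_eq 2
  have h3 := hfg.iteratedDeriv_eq 3
  rw [hg.iteratedDeriv_two_comp hf, iteratedDeriv_id] at h2
  rw [hg.iteratedDeriv_three_comp hf, iteratedDeriv_id] at h3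
  rw [hf1, one_mul] at h1
  rw [h1, hf1] at h2 h3
  norm_num at h2 h3
  exact ⟨h1, by linear_combination h2,
    by linear_combination h3 - 3 * iteratedDeriv 2 f (g x) * h2⟩

end Composition

theorem mc_three_eq_of_comp_eventuallyEq_id {f g : ℂ → ℂ} (hf : AnalyticAt ℂ f 0)
    (hg : AnalyticAt ℂ g 0) (hg0 : g 0 = 0) (hf1 : deriv f 0 = 1) (hfg : f ∘ g =ᶠ[𝓝 0] id) :
    mc g 3 = 2 * mc f 2 ^ 2 - mc f 3 := by
  rw [← hg0] at hf hf1
  obtain ⟨-, -, h3⟩ := hg.iteratedDeriv_of_comp_eventuallyEq_id hf hf1 hfg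
  rw [hg0] at h3
  simp only [mc, h3, Nat.factorial]
  push_cast
  ring

theorem BR_halfplane_bounds_general (m : ℝ) (f g : ℂ → ℂ)
    (hfg : BiUnivalentPair f g)
    (hf : MemPm m fun z => if z = 0 then 1 else f z / z)
    (hg : MemPm m fun w => if w = 0 then 1 else g w / w) :
    ‖mc f 2‖ ≤ Real.sqrt m ∧
      ‖mc f 3‖ ≤ m ∧
      ‖2 * mc f 2 ^ 2 - mc f 3‖ ≤ m := by
  obtain ⟨hfa, hf0, hf1, -, hga, -, hg0, hinv⟩ := hfg
  have h0 : (0 : ℂ) ∈ unitDisk := mem_ball_self one_pos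
  have hfg : f ∘ g =ᶠ[𝓝 0] id := by
    filter_upwards [ball_mem_nhds (0 : ℂ) (by norm_num : (0 : ℝ) < 1 / 4)] with w hw
    exact hinv w (mem_ball_zero_iff.1 hw)
  have ha3 := mc_succ_eq_mc_ite_div (n := 2) hf0 (hf.1 0 h0).contDiffAt
  have hb3 := mc_succ_eq_mc_ite_div (n := 2) hg0 (hg.1 0 h0).contDiffAt
  have hinv3 := mc_three_eq_of_comp_eventuallyEq_id (hfa 0 h0) (hga 0 h0) hg0 hf1 hfg
  have ha3_le : ‖mc f 3‖ ≤ m := ha3 ▸ hf.norm_mc_le 2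
  have hb3_le : ‖2 * mc f 2 ^ 2 - mc f 3‖ ≤ m := hinv3 ▸ hb3 ▸ hg.norm_mc_le 2
  have ha2_sq : ‖mc f 2‖ ^ 2 ≤ m := by
    have h := norm_add_le (mc f 3) (2 * mc f 2 ^ 2 - mc f 3)
    rw [add_sub_cancel, norm_mul, norm_pow, RCLike.norm_ofNat] at h
    linarith
  exact ⟨by simpa using Real.abs_le_sqrt ha2_sq, ha3_le, hb3_le⟩

/-- Example 2.2: the case `k(z) = z/(1-z)` of Corollary 2.1, i.e. `f(z)/z ∈ P_m` and
`g(w)/w ∈ P_m`. -/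
theorem BR_halfplane_bounds (m : ℝ) (hm : 2 ≤ m) (f g : ℂ → ℂ)
    (hfg : BiUnivalentPair f g)
    (hf : MemPm m fun z => if z = 0 then 1 else f z / z)
    (hg : MemPm m fun w => if w = 0 then 1 else g w / w) :
    ‖mc f 2‖ ≤ Real.sqrt m ∧
      ‖mc f 3‖ ≤ m ∧
      ‖2 * mc f 2 ^ 2 - mc f 3‖ ≤ m :=
  BR_halfplane_bounds_general m f g hfg hf hg
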